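/- In the coupled-curve setting below, fix n >= 0 and a point u_bar in (0, e^{lambda n} a), and suppose that for i = 1,2 the function psi_n^i is continuous and monotonically increasing (i.e. admits continuous nondecreasing local lifts) on a neighborhood of u_bar, and is C^1 on that neighborhood except possibly at u_bar. Then: (ii) if psi_n^1(u_bar) and psi_n^2(u_bar) are both different from 0 and 1/2, then for i=1,2 the function zeta_n^i is continuous and monotonically increasing on a neighborhood of u_bar, and is C^1 there except possibly at u_bar (C^1 at u_bar whenever both psi_n^i are C^1 at u_bar); (iii) if psi_n^1(u_bar) is 0 or 1/2, then zeta_n^1 is continuous and monotonically increasing on a neighborhood of u_bar and C^1 there except possibly at u_bar. Statement (iii) also holds with the indices 1 and 2 interchanged. -/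

import Mathlib

noncomputable section

open Real Set Filter Topology MeasureTheory
open scoped Classical

instance factOneLtZero : Fact ((0:ℝ) < 1) := ⟨zero_lt_one⟩

/-- The circle `𝕋 = ℝ/ℤ`. -/
abbrev Circ : Type := AddCircle (1 : ℝ)

/-- The projection `ℝ → 𝕋`. -/
def coeT (x : ℝ) : Circ := (x : Circ)

/-- The representative of a point of `𝕋` in `[0,1)` (identification of `𝕋` with `[0,1)`). -/
def rep (z : Circ) : ℝ := (AddCircle.equivIco 1 0 z : ℝ)

/-- `f : ℝ → 𝕋` has derivative `d` at `u`, computed via a local lift. -/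
def HasCircDerivAt (f : ℝ → Circ) (d : ℝ) (u : ℝ) : Prop :=
  ∃ F : ℝ → ℝ, (∀ᶠ v in nhds u, coeT (F v) = f v) ∧ HasDerivAt F d u

/-- `f : ℝ → 𝕋` is `C¹` on a neighborhood of `u` (via a local lift). -/
def IsC1At (f : ℝ → Circ) (u : ℝ) : Prop :=
  ∃ (F : ℝ → ℝ) (ε : ℝ), 0 < ε ∧ (∀ v ∈ Ioo (u - ε) (u + ε), coeT (F v) = f v) ∧
    ContDiffOn ℝ 1 F (Ioo (u - ε) (u + ε))

/-- `f : ℝ → 𝕋` is continuous and monotonically increasing on a neighborhood of `u`,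
i.e. admits a continuous nondecreasing local lift there. -/
def ContMonoNear (f : ℝ → Circ) (u : ℝ) : Prop :=
  ∃ (F : ℝ → ℝ) (ε : ℝ), 0 < ε ∧ (∀ v ∈ Ioo (u - ε) (u + ε), coeT (F v) = f v) ∧
    ContinuousOn F (Ioo (u - ε) (u + ε)) ∧ MonotoneOn F (Ioo (u - ε) (u + ε))

/-- `f : ℝ → 𝕋` is `C¹` on a neighborhood of `u`, except possibly at `u` itself. -/
def C1StarNear (f : ℝ → Circ) (u : ℝ) : Prop :=
  ∃ ε : ℝ, 0 < ε ∧ ∀ v ∈ Ioo (u - ε) (u + ε), v ≠ u → IsC1At f v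

/-- The number of the coordinates of `z = (z₁, z₂) ∈ 𝕋²` lying in the arc `(1/2, 1)`. -/
def cnt (z : Circ × Circ) : ℕ :=
  (if 1/2 < rep z.1 then 1 else 0) + (if 1/2 < rep z.2 then 1 else 0)

/-- The basic data of the model with `N = 2` inhibitory components: the constants
`λ, b, c, κ, c', a, β`, the function `Φ`, the (lifted) North-South flows `G i` generated by
the (lifted) `C²` vector fields `V i` vanishing exactly at `0` and `1/2` (mod 1), the arcs
`I_i^±` (via `δ_i^±`), and assumptions (A1)-(A2). -/
structure Base where
  lam : ℝ
  b : ℝ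
  c : ℝ
  kappa : ℕ
  c' : ℝ
  a : ℝ
  beta : ℝ
  lam_pos : 0 < lam
  b_mem : b ∈ Ioo (0:ℝ) 1
  c_mem : c ∈ Ioo (0:ℝ) 1
  kappa_pos : 0 < kappa
  c'_pos : 0 < c'
  a_pos : 0 < a
  beta_pos : 0 < beta
  /-- the feedback strength function `Φ : {0,1,2} → [0,1)` -/
  Phi : ℕ → ℝ
  Phi_zero : Phi 0 = 0
  Phi_mono : ∀ m n : ℕ, m < n → n ≤ 2 → Phi m < Phi n
  Phi_nonneg : ∀ n ≤ 2, 0 ≤ Phi n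
  Phi_lt_one : ∀ n ≤ 2, Phi n < 1
  /-- lifts of the vector fields generating the North-South flows -/
  V : Fin 2 → ℝ → ℝ
  /-- lifts of the North-South flows `g_i^t` -/
  G : Fin 2 → ℝ → ℝ → ℝ
  V_smooth : ∀ i, ContDiff ℝ 2 (V i)
  V_periodic : ∀ i x, V i (x + 1) = V i x
  V_zero_iff : ∀ i x, V i x = 0 ↔ ∃ n : ℤ, x = n ∨ x = n + 1/2
  V_deriv_zero_neg : ∀ i, deriv (V i) 0 < 0
  V_deriv_half_pos : ∀ i, 0 < deriv (V i) (1/2)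
  G_zero : ∀ i x, G i 0 x = x
  G_add : ∀ i s t x, G i (s + t) x = G i s (G i t x)
  G_periodic : ∀ i t x, G i t (x + 1) = G i t x + 1
  G_ode : ∀ i x t, HasDerivAt (fun s => G i s x) (V i (G i t x)) t
  /-- half-width of the arc `I_i^+` around the N-pole `1/2` -/
  deltaP : Fin 2 → ℝ
  /-- half-width of the arc `I_i^-` around the S-pole `0` -/
  deltaM : Fin 2 → ℝ
  deltaP_pos : ∀ i, 0 < deltaP i
  deltaM_pos : ∀ i, 0 < deltaM i
  /-- (A1), expansion part: `(g_i^t)' > e^λ` on `I_i^+` for `1-b ≤ t ≤ τ_max` -/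
  A1_exp : ∀ i, ∀ t ∈ Icc (1 - b) ((1 - b) * (1 - Phi 2)⁻¹),
    ∀ x ∈ Icc (1/2 - deltaP i) (1/2 + deltaP i), Real.exp lam < deriv (G i t) x
  /-- (A1), contraction part: `(g_i^t)' ≤ c` on `I_i^-` for `1-b ≤ t ≤ τ_max` -/
  A1_con : ∀ i, ∀ t ∈ Icc (1 - b) ((1 - b) * (1 - Phi 2)⁻¹),
    ∀ x ∈ Icc (-(deltaM i)) (deltaM i), deriv (G i t) x ≤ c
  /-- (A2): `g_i^t(I_i^+) ⊇ 𝕋 \ I_i^-` for `1-b ≤ t ≤ τ_max` -/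
  A2 : ∀ i, ∀ t ∈ Icc (1 - b) ((1 - b) * (1 - Phi 2)⁻¹),
    (coeT '' Icc (-(deltaM i)) (deltaM i))ᶜ ⊆
      (fun x => coeT (G i t x)) '' Icc (1/2 - deltaP i) (1/2 + deltaP i)

namespace Base

variable (B : Base)

/-- The maximal return time `τ_max = (1-b)(1-Φ(2))⁻¹`. -/
def tauMax : ℝ := (1 - B.b) * (1 - B.Phi 2)⁻¹

/-- The return time `τ(z₁,z₂) = (1-b)(1-Φ(#{i : z_i ∈ (1/2,1)}))⁻¹` from `Σ_b` to `Σ₀`. -/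
def tauT (z : Circ × Circ) : ℝ := (1 - B.b) * (1 - B.Phi (cnt z))⁻¹

/-- The North-South flow `g_i^t` on the circle. -/
def gT (i : Fin 2) (t : ℝ) (z : Circ) : Circ := coeT (B.G i t (rep z))

/-- The arc `I_i^+ = [1/2 - δ_i^+, 1/2 + δ_i^+] ⊆ 𝕋`. -/
def IiP (i : Fin 2) : Set Circ := coeT '' Icc (1/2 - B.deltaP i) (1/2 + B.deltaP i)

/-- The arc `I_i^- = [-δ_i^-, δ_i^-] ⊆ 𝕋`. -/
def IiM (i : Fin 2) : Set Circ := coeT '' Icc (-(B.deltaM i)) (B.deltaM i)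

/-- `d_i = dist(∂ I_i^-, ∂ g_i^{1-b}(I_i^+))`. -/
def dd (i : Fin 2) : ℝ :=
  sInf {r : ℝ | ∃ x ∈ frontier (B.IiM i),
    ∃ y ∈ frontier ((B.gT i (1 - B.b)) '' (B.IiP i)), r = dist x y}

end Base

/-- The full data of the model with `N = 2`: the base data together with `ε`, the lifted
rotation maps `R i` (local diffeomorphisms `r_i` of the circle of degree `deg i ≤ κ`)
satisfying (A3)-(A4), and the base points `x0 n` of the iterated curves. -/
structure Setting extends Base where
  eps : ℝ
  eps_pos : 0 < eps
  /-- lifts of the rotation maps `r_i : 𝕋 → 𝕋` -/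
  R : Fin 2 → ℝ → ℝ
  /-- the degrees of the `r_i` -/
  deg : Fin 2 → ℕ
  R_smooth : ∀ i, ContDiff ℝ 2 (R i)
  R_equiv : ∀ i x, R i (x + 1) = R i x + deg i
  deg_ge_one : ∀ i, 1 ≤ deg i
  deg_le_kappa : ∀ i, deg i ≤ toBase.kappa
  R_deriv_pos : ∀ i x, 0 < deriv (R i) x
  /-- (A3): `r_i' > ε⁻¹` wherever `r_i ∈ [d_i, 1 - d_i]` -/
  A3 : ∀ i x, rep (coeT (R i x)) ∈ Icc (toBase.dd i) (1 - toBase.dd i) →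
    eps⁻¹ < deriv (R i) x
  /-- (A4): `r_i' > c'` everywhere -/
  A4 : ∀ i x, toBase.c' < deriv (R i) x
  /-- the `x`-coordinates `x_n = π_x(γ_n(0))` determining `ι_n` -/
  x0 : ℕ → ℝ

namespace Setting

variable (S : Setting)

/-- The rotation map `r_i : 𝕋 → 𝕋`. -/
def rT (i : Fin 2) (z : Circ) : Circ := coeT (S.R i (rep z))

/-- `ι_n(u) = β u + x_n (mod 1)`. -/
def iota (n : ℕ) (u : ℝ) : Circ := coeT (S.toBase.beta * u + S.x0 n)

/-- `Φ₁`-image of a curve: `ψ(u) = θ(u) + (r₁(ι_n(u)), r₂(ι_n(u)))`. -/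
def psiOf (th : ℝ → Circ × Circ) (n : ℕ) (u : ℝ) : Circ × Circ :=
  ((th u).1 + S.rT 0 (S.iota n u), (th u).2 + S.rT 1 (S.iota n u))

/-- `Φ₂∘Φ₁`-image of a curve: `ζ(u) = (g₁^{τ(ψ(u))}(ψ¹(u)), g₂^{τ(ψ(u))}(ψ²(u)))`. -/
def zetaOf (th : ℝ → Circ × Circ) (n : ℕ) (u : ℝ) : Circ × Circ :=
  (S.toBase.gT 0 (S.toBase.tauT (S.psiOf th n u)) (S.psiOf th n u).1,
   S.toBase.gT 1 (S.toBase.tauT (S.psiOf th n u)) (S.psiOf th n u).2)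

/-- The iterated curves `θ_n`: `θ_0 ≡ (0,0)` and `θ_{n+1}(u) = ζ_n(e^{-λ} u)`. -/
def theta : ℕ → ℝ → Circ × Circ
  | 0 => fun _ => (0, 0)
  | n + 1 => fun u => S.zetaOf (theta n) n (Real.exp (-S.toBase.lam) * u)

/-- The curves `ψ_n`. -/
def psi (n : ℕ) (u : ℝ) : Circ × Circ := S.psiOf (S.theta n) n u

/-- The curves `ζ_n`. -/
def zeta (n : ℕ) (u : ℝ) : Circ × Circ := S.zetaOf (S.theta n) n u

/-- The component `ψ_n^i`. -/
def psiI (n : ℕ) (i : Fin 2) (u : ℝ) : Circ :=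
  if i = 0 then (S.psi n u).1 else (S.psi n u).2

/-- The component `ζ_n^i`. -/
def zetaI (n : ℕ) (i : Fin 2) (u : ℝ) : Circ :=
  if i = 0 then (S.zeta n u).1 else (S.zeta n u).2

/-- The length `e^{λ n} a` of the domain of the curves at step `n`. -/
def len (n : ℕ) : ℝ := Real.exp (S.toBase.lam * n) * S.toBase.a

end Setting


/-! On each side of `ū` a continuous monotone lift of `ψ_n^i` either stays at its value at
`ū` or approaches it strictly from that side, so there `ψ_n^i` is either constant or confined to
one open arc between the poles `0` and `1/2`. Hence the number of coordinates in `(1/2, 1)`, and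
with it the return time `τ ∘ ψ_n`, is constant on each side of `ū`, and near `ū` if neither
`ψ_n^i(ū)` is a pole. With the flow time frozen, `ζ_n^i = g_i^t ∘ ψ_n^i` is continuous and
monotone, and it is `C¹` wherever `ψ_n^i` is `C¹` and off the poles, since the flow is `C¹` away
from its equilibria. At a pole `τ` may jump at `ū`, but the pole is fixed by every `g_i^t`, which
glues the two one-sided pieces together; a one-sided piece along which `ψ_n^i` sits at the pole
is constant. -/

theorem rep_coeT (x : ℝ) : rep (coeT x) = Int.fract x := by
  simp [rep, coeT, AddCircle.coe_equivIco_mk_apply (p := (1 : ℝ)) x]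

theorem coeT_rep (z : Circ) : coeT (rep z) = z :=
  AddCircle.coe_equivIco

theorem coeT_eq_coeT_iff {x y : ℝ} : coeT x = coeT y ↔ ∃ k : ℤ, x = y + k := by
  rw [coeT, coeT, ← sub_eq_zero, ← AddCircle.coe_sub, AddCircle.coe_eq_zero_iff]
  simp only [zsmul_eq_mul, mul_one, eq_comm (b := x - y), sub_eq_iff_eq_add']

theorem coeT_add_intCast (x : ℝ) (k : ℤ) : coeT (x + k) = coeT x :=
  coeT_eq_coeT_iff.2 ⟨k, rfl⟩

def IsPole (z : Circ) : Prop := z = coeT 0 ∨ z = coeT (1/2)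

theorem isPole_coeT_iff {x : ℝ} : IsPole (coeT x) ↔ ∃ n : ℤ, x = n ∨ x = n + 1/2 := by
  simp only [IsPole, coeT_eq_coeT_iff, zero_add, add_comm (1/2 : ℝ), exists_or]

def poleGap (k : ℤ) : Set ℝ := Ioo (k / 2) ((k + 1) / 2)

theorem not_isPole_coeT_of_mem_poleGap {k : ℤ} {x : ℝ} (hx : x ∈ poleGap k) :
    ¬IsPole (coeT x) := by
  rw [isPole_coeT_iff]
  rintro ⟨n, rfl | rfl⟩ <;> obtain ⟨h₁, h₂⟩ := hx
  · have : k < 2 * n := by exact_mod_cast (by linarith : (k : ℝ) < 2 * n)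
    have : 2 * n < k + 1 := by exact_mod_cast (by linarith : (2 * n : ℝ) < k + 1)
    omega
  · have : k < 2 * n + 1 := by exact_mod_cast (by linarith : (k : ℝ) < 2 * n + 1)
    have : 2 * n + 1 < k + 1 := by exact_mod_cast (by linarith : (2 * n + 1 : ℝ) < k + 1)
    omega

theorem half_lt_rep_coeT_iff_of_mem_poleGap {k : ℤ} {x : ℝ} (hx : x ∈ poleGap k) :
    1/2 < rep (coeT x) ↔ Odd k := by
  obtain ⟨h₁, h₂⟩ := hx
  rw [rep_coeT]
  rcases Int.even_or_odd' k with ⟨m, rfl | rfl⟩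
  · have hfl : ⌊x⌋ = m :=
      Int.floor_eq_iff.2 ⟨by push_cast at h₁; linarith, by push_cast at h₂; linarith⟩
    simp only [Int.fract, hfl, Int.not_odd_iff_even.2 (even_two_mul m), iff_false, not_lt]
    push_cast at h₂; linarith
  · have hfl : ⌊x⌋ = m :=
      Int.floor_eq_iff.2 ⟨by push_cast at h₁; linarith, by push_cast at h₂; linarith⟩
    simp only [Int.fract, hfl, odd_two_mul_add_one, iff_true]
    push_cast at h₁; linarith

theorem poleGap_mem_nhds {x : ℝ} (hx : ¬IsPole (coeT x)) : poleGap ⌊2 * x⌋ ∈ 𝓝 x := by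
  have hne : (⌊2 * x⌋ : ℝ) ≠ 2 * x := by
    intro h
    refine hx (isPole_coeT_iff.2 ?_)
    rcases Int.even_or_odd' ⌊2 * x⌋ with ⟨j, hj | hj⟩ <;> rw [hj] at h <;> push_cast at h
    exacts [⟨j, Or.inl (by linarith)⟩, ⟨j, Or.inr (by linarith)⟩]
  refine isOpen_Ioo.mem_nhds ⟨?_, ?_⟩
  · linarith [lt_of_le_of_ne (Int.floor_le (2 * x)) hne]
  · linarith [Int.lt_floor_add_one (2 * x)]

theorem exists_poleGap_mem_nhdsLT (x : ℝ) : ∃ k : ℤ, poleGap k ∈ 𝓝[<] x :=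
  ⟨⌈2 * x⌉ - 1, Ioo_mem_nhdsLT_of_mem ⟨by push_cast; linarith [Int.ceil_lt_add_one (2 * x)],
    by push_cast; linarith [Int.le_ceil (2 * x)]⟩⟩

theorem exists_poleGap_mem_nhdsGT (x : ℝ) : ∃ k : ℤ, poleGap k ∈ 𝓝[>] x :=
  ⟨⌊2 * x⌋, mem_of_superset (Ioo_mem_nhdsGT (by linarith [Int.lt_floor_add_one (2 * x)]))
    (Ioo_subset_Ioo_left (by linarith [Int.floor_le (2 * x)]))⟩

theorem isC1At_iff {f : ℝ → Circ} {u : ℝ} :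
    IsC1At f u ↔
      ∃ F : ℝ → ℝ, (∀ᶠ v in 𝓝 u, coeT (F v) = f v) ∧ ContDiffAt ℝ 1 F u := by
  constructor
  · rintro ⟨F, ε, hε, hlift, hF⟩
    have hmem : Ioo (u - ε) (u + ε) ∈ 𝓝 u := Ioo_mem_nhds (by linarith) (by linarith)
    exact ⟨F, mem_of_superset hmem hlift, hF.contDiffAt hmem⟩
  · rintro ⟨F, hlift, hF⟩
    obtain ⟨s, hs, hFs⟩ := hF.contDiffOn le_rfl (by simp)
    obtain ⟨ε, hε, hball⟩ := Metric.mem_nhds_iff.1 (inter_mem hlift hs)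
    rw [Real.ball_eq_Ioo] at hball
    exact ⟨F, ε, hε, fun v hv => (hball hv).1, hFs.mono fun v hv => (hball hv).2⟩

theorem IsC1At.congr_of_eventuallyEq {f g : ℝ → Circ} {u : ℝ} (hf : IsC1At f u)
    (hfg : f =ᶠ[𝓝 u] g) : IsC1At g u := by
  obtain ⟨F, hlift, hF⟩ := isC1At_iff.1 hf
  refine isC1At_iff.2 ⟨F, ?_, hF⟩
  filter_upwards [hlift, hfg] with v h₁ h₂ using h₁.trans h₂

theorem isC1At_of_eventuallyEq_const {f : ℝ → Circ} {u : ℝ} {z : Circ}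
    (hf : ∀ᶠ v in 𝓝 u, f v = z) : IsC1At f u :=
  isC1At_iff.2 ⟨fun _ => rep z, hf.mono fun _ hv => by rw [hv, coeT_rep], contDiffAt_const⟩

theorem c1StarNear_iff {f : ℝ → Circ} {u : ℝ} :
    C1StarNear f u ↔ ∀ᶠ v in 𝓝[≠] u, IsC1At f v := by
  simp only [C1StarNear, eventually_nhdsWithin_iff, Metric.eventually_nhds_iff,
    ← Metric.mem_ball, Real.ball_eq_Ioo, mem_compl_singleton_iff, gt_iff_lt]

theorem C1StarNear.of_eventually_imp {f g : ℝ → Circ} {u : ℝ} (hf : C1StarNear f u)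
    (h : ∀ᶠ v in 𝓝[≠] u, IsC1At f v → IsC1At g v) : C1StarNear g u :=
  c1StarNear_iff.2 ((c1StarNear_iff.1 hf).mp h)

theorem contMonoNear_iff {f : ℝ → Circ} {u : ℝ} :
    ContMonoNear f u ↔ ∃ F : ℝ → ℝ, (∀ᶠ v in 𝓝 u, coeT (F v) = f v) ∧
      ∃ s ∈ 𝓝 u, ContinuousOn F s ∧ MonotoneOn F s := by
  constructor
  · rintro ⟨F, ε, hε, hlift, hFc, hFm⟩
    have hmem : Ioo (u - ε) (u + ε) ∈ 𝓝 u := Ioo_mem_nhds (by linarith) (by linarith)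
    exact ⟨F, mem_of_superset hmem hlift, _, hmem, hFc, hFm⟩
  · rintro ⟨F, hlift, s, hs, hFc, hFm⟩
    obtain ⟨ε, hε, hball⟩ := Metric.mem_nhds_iff.1 (inter_mem hlift hs)
    rw [Real.ball_eq_Ioo] at hball
    exact ⟨F, ε, hε, fun v hv => (hball hv).1, hFc.mono fun v hv => (hball hv).2,
      hFm.mono fun v hv => (hball hv).2⟩

section OneSided

variable {α β : Type*} [LinearOrder α] [TopologicalSpace α] [OrderTopology α]
  [PartialOrder β] [TopologicalSpace β] {F : α → β} {s : Set α} {c : α}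

theorem MonotoneOn.eventually_eq_or_tendsto_nhdsLT (hF : MonotoneOn F s) (hs : s ∈ 𝓝 c)
    (hc : ContinuousAt F c) :
    (∀ᶠ u in 𝓝[<] c, F u = F c) ∨ Tendsto F (𝓝[<] c) (𝓝[<] (F c)) := by
  have hmem : ∀ᶠ u in 𝓝[<] c, u ∈ s ∧ u < c :=
    Filter.Eventually.and (mem_nhdsWithin_of_mem_nhds hs) self_mem_nhdsWithin
  have hle : ∀ᶠ u in 𝓝[<] c, F u ≤ F c :=
    hmem.mono fun u hu => hF hu.1 (mem_of_mem_nhds hs) hu.2.le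
  by_cases hfreq : ∃ᶠ u in 𝓝[<] c, F u = F c
  · left
    obtain ⟨u₀, hu₀, hu₀s, hu₀c⟩ := (hfreq.and_eventually hmem).exists
    filter_upwards [Ioo_mem_nhdsLT hu₀c, hmem, hle] with u hu hus hu'
    exact le_antisymm hu' (hu₀ ▸ hF hu₀s hus.1 hu.1.le)
  · right
    refine tendsto_nhdsWithin_of_tendsto_nhds_of_eventually_within _
      (hc.tendsto.mono_left nhdsWithin_le_nhds) ?_
    filter_upwards [hle, not_frequently.1 hfreq] with u h₁ h₂ using lt_of_le_of_ne h₁ h₂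

theorem MonotoneOn.eventually_eq_or_tendsto_nhdsGT (hF : MonotoneOn F s) (hs : s ∈ 𝓝 c)
    (hc : ContinuousAt F c) :
    (∀ᶠ u in 𝓝[>] c, F u = F c) ∨ Tendsto F (𝓝[>] c) (𝓝[>] (F c)) :=
  MonotoneOn.eventually_eq_or_tendsto_nhdsLT (α := αᵒᵈ) (β := βᵒᵈ) hF.dual hs hc

end OneSided

def EventuallyEqOrInPoleGap (f : ℝ → Circ) (l : Filter ℝ) (z : Circ) : Prop :=
  (∀ᶠ u in l, f u = z) ∨ ∃ k : ℤ, ∀ᶠ u in l, f u ∈ coeT '' poleGap k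

namespace EventuallyEqOrInPoleGap

variable {f : ℝ → Circ} {l : Filter ℝ} {z : Circ}

theorem of_lift {F : ℝ → ℝ} {l' : Filter ℝ} {x : ℝ}
    (hlift : ∀ᶠ u in l, coeT (F u) = f u) (hl' : ∃ k, poleGap k ∈ l')
    (hF : (∀ᶠ u in l, F u = x) ∨ Tendsto F l l') :
    EventuallyEqOrInPoleGap f l (coeT x) := by
  rcases hF with hF | hF
  · left
    filter_upwards [hF, hlift] with u h₁ h₂ using h₁ ▸ h₂.symm
  · obtain ⟨k, hk⟩ := hl'
    right
    refine ⟨k, ?_⟩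
    filter_upwards [hF hk, hlift] with u h₁ h₂ using h₂ ▸ mem_image_of_mem _ h₁

theorem eventuallyConst_half_lt_rep (h : EventuallyEqOrInPoleGap f l z) :
    EventuallyConst (fun u => 1/2 < rep (f u)) l := by
  rcases h with hz | ⟨k, hk⟩
  · exact (EventuallyConst.const (1/2 < rep z)).congr (hz.mono fun u hu => by simp only [hu])
  · refine (EventuallyConst.const (Odd k)).congr (hk.mono ?_)
    rintro u ⟨x, hx, hxu⟩
    simp only [← hxu, half_lt_rep_coeT_iff_of_mem_poleGap hx]

end EventuallyEqOrInPoleGap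

namespace ContMonoNear

variable {f : ℝ → Circ} {c : ℝ}

theorem eventuallyEqOrInPoleGap_nhdsLT (h : ContMonoNear f c) :
    EventuallyEqOrInPoleGap f (𝓝[<] c) (f c) := by
  obtain ⟨F, hlift, s, hs, hFc, hFm⟩ := contMonoNear_iff.1 h
  rw [← hlift.self_of_nhds]
  exact .of_lift (hlift.filter_mono nhdsWithin_le_nhds) (exists_poleGap_mem_nhdsLT _)
    (hFm.eventually_eq_or_tendsto_nhdsLT hs (hFc.continuousAt hs))

theorem eventuallyEqOrInPoleGap_nhdsGT (h : ContMonoNear f c) :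
    EventuallyEqOrInPoleGap f (𝓝[>] c) (f c) := by
  obtain ⟨F, hlift, s, hs, hFc, hFm⟩ := contMonoNear_iff.1 h
  rw [← hlift.self_of_nhds]
  exact .of_lift (hlift.filter_mono nhdsWithin_le_nhds) (exists_poleGap_mem_nhdsGT _)
    (hFm.eventually_eq_or_tendsto_nhdsGT hs (hFc.continuousAt hs))

theorem eventuallyEqOrInPoleGap_nhds (h : ContMonoNear f c) (hc : ¬IsPole (f c)) :
    EventuallyEqOrInPoleGap f (𝓝 c) (f c) := by
  obtain ⟨F, hlift, s, hs, hFc, -⟩ := contMonoNear_iff.1 h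
  rw [← hlift.self_of_nhds] at hc ⊢
  exact .of_lift hlift ⟨_, poleGap_mem_nhds hc⟩ (Or.inr (hFc.continuousAt hs))

end ContMonoNear

theorem Function.Periodic.exists_lipschitzWith {f : ℝ → ℝ} {c : ℝ}
    (hp : Function.Periodic f c) (hc : c ≠ 0) (hf : ContDiff ℝ 1 f) :
    ∃ K, LipschitzWith K f := by
  have hp' : Function.Periodic (deriv f) c := fun x => by
    rw [← deriv_comp_add_const, show (fun y => f (y + c)) = f from funext hp]
  obtain ⟨C, hC⟩ := isBounded_iff_forall_norm_le.1
    (hp'.isBounded_of_continuous hc hf.continuous_deriv_one)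
  refine ⟨C.toNNReal,
    lipschitzWith_of_nnnorm_deriv_le (hf.differentiable one_ne_zero) fun x => ?_⟩
  rw [← NNReal.coe_le_coe, coe_nnnorm, Real.coe_toNNReal']
  exact (hC _ (mem_range_self x)).trans (le_max_left _ _)

structure IsFlowOf (V : ℝ → ℝ) (G : ℝ → ℝ → ℝ) : Prop where
  exists_lipschitzWith : ∃ K, LipschitzWith K V
  map_zero : ∀ x, G 0 x = x
  map_add : ∀ s t x, G (s + t) x = G s (G t x)
  hasDerivAt : ∀ x t, HasDerivAt (fun s => G s x) (V (G t x)) t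

namespace IsFlowOf

variable {V : ℝ → ℝ} {G : ℝ → ℝ → ℝ} {F τ : ℝ → ℝ} {s : Set ℝ} {c : ℝ}

theorem continuous_orbit (h : IsFlowOf V G) (x : ℝ) : Continuous fun s => G s x :=
  continuous_iff_continuousAt.2 fun t => (h.hasDerivAt x t).continuousAt

theorem apply_eq_self (h : IsFlowOf V G) {x : ℝ} (hx : V x = 0) (t : ℝ) : G t x = x := by
  obtain ⟨K, hK⟩ := h.exists_lipschitzWith
  have := ODE_solution_unique_univ (v := fun _ => V) (s := fun _ => univ) (t₀ := 0)
    (f := fun s => G s x) (g := fun _ => x) (fun _ => hK.lipschitzOnWith)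
    (fun s => ⟨h.hasDerivAt x s, trivial⟩)
    (fun s => ⟨by rw [hx]; exact hasDerivAt_const s x, trivial⟩) (h.map_zero x)
  exact congrFun this t

theorem leftInverse (h : IsFlowOf V G) (t : ℝ) : Function.LeftInverse (G (-t)) (G t) :=
  fun x => by rw [← h.map_add, neg_add_cancel, h.map_zero]

theorem strictMono (h : IsFlowOf V G) (t : ℝ) : StrictMono (G t) := by
  refine fun x y hxy => lt_of_not_ge fun hle => ?_
  have h0 : (0 : ℝ) ∈ uIcc (G 0 y - G 0 x) (G t y - G t x) := by
    rw [h.map_zero, h.map_zero, mem_uIcc]; right; constructor <;> linarith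
  obtain ⟨s, -, hs⟩ := intermediate_value_uIcc
    ((h.continuous_orbit y).sub (h.continuous_orbit x)).continuousOn h0
  exact hxy.ne ((h.leftInverse s).injective (sub_eq_zero.1 hs)).symm

theorem continuous (h : IsFlowOf V G) (t : ℝ) : Continuous (G t) :=
  (h.strictMono t).monotone.continuous_of_surjective
    (by simpa using (h.leftInverse (-t)).surjective)

/-- Near a non-equilibrium `x₀` the orbit map `φ = (G · x₀)` is a local `C¹` diffeomorphism
(inverse function theorem), and `G t = φ ∘ (t + ·) ∘ φ⁻¹` there. -/
theorem contDiffAt (h : IsFlowOf V G) {x₀ : ℝ} (hx : V x₀ ≠ 0) (t : ℝ) :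
    ContDiffAt ℝ 1 (G t) x₀ := by
  set φ : ℝ → ℝ := fun s => G s x₀
  obtain ⟨K, hK⟩ := h.exists_lipschitzWith
  have hφ' : deriv φ = fun s => V (φ s) := funext fun s => (h.hasDerivAt x₀ s).deriv
  have hφ : ContDiff ℝ 1 φ := contDiff_one_iff_deriv.2
    ⟨fun s => (h.hasDerivAt x₀ s).differentiableAt,
      hφ' ▸ hK.continuous.comp (h.continuous_orbit x₀)⟩
  have hφ0 : φ 0 = x₀ := h.map_zero x₀
  have he := (h.hasDerivAt x₀ 0).hasFDerivAt_equiv (by rwa [h.map_zero])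
  have hinv := hφ.contDiffAt.to_localInverse he one_ne_zero
  have hright := (hφ.contDiffAt.hasStrictFDerivAt' he one_ne_zero).eventually_right_inverse
  rw [hφ0] at hinv hright
  have hconj := hφ.contDiffAt.comp x₀ ((contDiffAt_const (c := t)).add hinv)
  refine hconj.congr_of_eventuallyEq ?_
  filter_upwards [hright] with y hy
  conv_lhs => rw [← hy]
  exact (h.map_add _ _ _).symm

theorem continuousOn_comp (h : IsFlowOf V G) (hFc : ContinuousOn F s) (t : ℝ) :
    ContinuousOn (fun u => G t (F u)) s :=
  (h.continuous t).comp_continuousOn hFc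

theorem monotoneOn_comp (h : IsFlowOf V G) (hFm : MonotoneOn F s) (t : ℝ) :
    MonotoneOn (fun u => G t (F u)) s :=
  (h.strictMono t).monotone.comp_monotoneOn hFm

theorem exists_continuousOn_monotoneOn_of_eventuallyEq (h : IsFlowOf V G) (hs : s ∈ 𝓝 c)
    (hFc : ContinuousOn F s) (hFm : MonotoneOn F s) {t : ℝ} (hτ : ∀ᶠ u in 𝓝 c, τ u = t) :
    ∃ s' ∈ 𝓝 c, ContinuousOn (fun u => G (τ u) (F u)) s' ∧
      MonotoneOn (fun u => G (τ u) (F u)) s' := by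
  have heq : EqOn (fun u => G (τ u) (F u)) (fun u => G t (F u)) (s ∩ {u | τ u = t}) :=
    fun u hu => by simp only [hu.2.out]
  exact ⟨_, inter_mem hs hτ, (h.continuousOn_comp (hFc.mono inter_subset_left) t).congr heq,
    (h.monotoneOn_comp (hFm.mono inter_subset_left) t).congr heq.symm⟩

theorem continuousOn_piecewise_of_apply_eq_zero (h : IsFlowOf V G) (hFc : ContinuousOn F s)
    (hfix : V (F c) = 0) (tL tR : ℝ) :
    ContinuousOn (fun u => if u ≤ c then G tL (F u) else G tR (F u)) s := by
  refine ContinuousOn.if ?_ ((h.continuousOn_comp hFc tL).mono inter_subset_left)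
    ((h.continuousOn_comp hFc tR).mono inter_subset_left)
  rintro u ⟨-, hu⟩
  rw [show {u : ℝ | u ≤ c} = Iic c from rfl, frontier_Iic, mem_singleton_iff] at hu
  rw [hu, h.apply_eq_self hfix, h.apply_eq_self hfix]

theorem monotoneOn_piecewise_of_apply_eq_zero (h : IsFlowOf V G) (hFm : MonotoneOn F s)
    (hcs : c ∈ s) (hfix : V (F c) = 0) (tL tR : ℝ) :
    MonotoneOn (fun u => if u ≤ c then G tL (F u) else G tR (F u)) s := by
  intro a ha b hb hab
  dsimp only
  split_ifs with hac hbc hbc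
  · exact h.monotoneOn_comp hFm tL ha hb hab
  · calc G tL (F a) ≤ G tL (F c) := h.monotoneOn_comp hFm tL ha hcs hac
      _ = G tR (F c) := by rw [h.apply_eq_self hfix, h.apply_eq_self hfix]
      _ ≤ G tR (F b) := h.monotoneOn_comp hFm tR hcs hb (le_of_not_ge hbc)
  · exact absurd (hab.trans hbc) hac
  · exact h.monotoneOn_comp hFm tR ha hb hab

theorem exists_continuousOn_monotoneOn_of_apply_eq_zero (h : IsFlowOf V G) (hs : s ∈ 𝓝 c)
    (hFc : ContinuousOn F s) (hFm : MonotoneOn F s) (hfix : V (F c) = 0) {tL tR : ℝ}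
    (hL : ∀ᶠ u in 𝓝[<] c, τ u = tL) (hR : ∀ᶠ u in 𝓝[>] c, τ u = tR) :
    ∃ s' ∈ 𝓝 c, ContinuousOn (fun u => G (τ u) (F u)) s' ∧
      MonotoneOn (fun u => G (τ u) (F u)) s' := by
  rw [eventually_nhdsWithin_iff] at hL hR
  set s' := s ∩ {u | (u ∈ Iio c → τ u = tL) ∧ (u ∈ Ioi c → τ u = tR)}
  have heq : EqOn (fun u => G (τ u) (F u))
      (fun u => if u ≤ c then G tL (F u) else G tR (F u)) s' := by
    rintro u ⟨-, huL, huR⟩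
    dsimp only
    rcases lt_trichotomy u c with hlt | rfl | hgt
    · rw [if_pos hlt.le, huL hlt]
    · rw [if_pos le_rfl, h.apply_eq_self hfix, h.apply_eq_self hfix]
    · rw [if_neg hgt.not_ge, huR hgt]
  exact ⟨s', inter_mem hs (hL.and hR),
    (h.continuousOn_piecewise_of_apply_eq_zero (hFc.mono inter_subset_left) hfix tL tR).congr heq,
    (h.monotoneOn_piecewise_of_apply_eq_zero (hFm.mono inter_subset_left)
      ⟨mem_of_mem_nhds hs, by simp⟩ hfix tL tR).congr heq.symm⟩

end IsFlowOf

namespace Base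

variable (B : Base) (i : Fin 2)

theorem isFlowOf : IsFlowOf (B.V i) (B.G i) :=
  ⟨Function.Periodic.exists_lipschitzWith (B.V_periodic i) one_ne_zero
    ((B.V_smooth i).of_le (by norm_num)), B.G_zero i, B.G_add i, B.G_ode i⟩

theorem G_add_intCast (t x : ℝ) (k : ℤ) : B.G i t (x + k) = B.G i t x + k := by
  have hp : Function.Periodic (fun y => B.G i t y - y) 1 := fun y => by
    simp only [B.G_periodic]; ring
  have := hp.int_mul k x
  simp only [mul_one] at this
  linarith

theorem gT_coeT (t x : ℝ) : B.gT i t (coeT x) = coeT (B.G i t x) := by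
  rw [gT, rep_coeT, ← coeT_add_intCast _ ⌊x⌋, ← G_add_intCast, Int.fract_add_floor]

theorem V_eq_zero_iff (x : ℝ) : B.V i x = 0 ↔ IsPole (coeT x) :=
  (B.V_zero_iff i x).trans isPole_coeT_iff.symm

theorem gT_eq_self_of_isPole (t : ℝ) {z : Circ} (hz : IsPole z) : B.gT i t z = z := by
  rw [gT, (B.isFlowOf i).apply_eq_self ((B.V_eq_zero_iff i _).2 (by rwa [coeT_rep])), coeT_rep]

theorem isC1At_gT (t : ℝ) {f : ℝ → Circ} {v : ℝ} (hf : IsC1At f v) (hv : ¬IsPole (f v)) :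
    IsC1At (fun u => B.gT i t (f u)) v := by
  obtain ⟨F, hlift, hF⟩ := isC1At_iff.1 hf
  have hV : B.V i (F v) ≠ 0 := by rwa [Ne, V_eq_zero_iff, hlift.self_of_nhds]
  refine isC1At_iff.2 ⟨fun u => B.G i t (F u), ?_, ((B.isFlowOf i).contDiffAt hV t).comp v hF⟩
  filter_upwards [hlift] with u hu
  rw [← hu, gT_coeT]

end Base

namespace Setting

variable (S : Setting) (n : ℕ) {i : Fin 2} {c : ℝ}

theorem zetaI_eq (i : Fin 2) (u : ℝ) :
    S.zetaI n i u = S.gT i (S.tauT (S.psi n u)) (S.psiI n i u) := by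
  fin_cases i <;> rfl

theorem eventuallyConst_tauT_psi {l : Filter ℝ} {z : Fin 2 → Circ}
    (h : ∀ i, EventuallyEqOrInPoleGap (S.psiI n i) l (z i)) :
    EventuallyConst (fun u => S.tauT (S.psi n u)) l := by
  refine ((h 0).eventuallyConst_half_lt_rep.comp₂ (fun p q : Prop => (1 - S.b) * (1 - S.Phi
    ((if p then 1 else 0) + (if q then 1 else 0)))⁻¹) (h 1).eventuallyConst_half_lt_rep).congr
    (Eventually.of_forall fun u => ?_)
  simp [Base.tauT, cnt, psiI]

theorem eventually_isC1At_zetaI {s : Set ℝ} (hs : IsOpen s) {z : Circ}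
    (hτ : EventuallyConst (fun u => S.tauT (S.psi n u)) (𝓝[s] c))
    (hψ : EventuallyEqOrInPoleGap (S.psiI n i) (𝓝[s] c) z) :
    ∀ᶠ v in 𝓝[s] c, IsC1At (S.psiI n i) v → IsC1At (S.zetaI n i) v := by
  have hloc {p : ℝ → Prop} (hp : ∀ᶠ u in 𝓝[s] c, p u) :
      ∀ᶠ v in 𝓝[s] c, ∀ᶠ u in 𝓝 v, p u :=
    (eventually_nhdsWithin_eventually_nhds_iff_of_isOpen hs).2 hp
  obtain ⟨t, ht⟩ := hτ.eventuallyEq_const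
  have hpole_or_const : ∀ᶠ v in 𝓝[s] c,
      ¬IsPole (S.psiI n i v) ∨ ∀ᶠ u in 𝓝 v, S.zetaI n i u = z := by
    rcases hψ with hψ | ⟨k, hk⟩
    · by_cases hz : IsPole z
      · filter_upwards [hloc hψ] with v hv
        exact .inr (hv.mono fun u hu => by rw [zetaI_eq, hu, S.gT_eq_self_of_isPole i _ hz])
      · filter_upwards [hψ] with v hv using .inl (hv ▸ hz)
    · filter_upwards [hk] with v ⟨x, hx, hxv⟩
      exact .inl (hxv ▸ not_isPole_coeT_of_mem_poleGap hx)
  filter_upwards [hloc ht, hpole_or_const] with v hτv hv hC1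
  rcases hv with hv | hv
  · refine (S.isC1At_gT i t hC1 hv).congr_of_eventuallyEq ?_
    filter_upwards [hτv] with u hu
    rw [zetaI_eq, hu]
  · exact isC1At_of_eventuallyEq_const hv

theorem eventually_isC1At_zetaI_nhds {z : Circ}
    (hτ : EventuallyConst (fun u => S.tauT (S.psi n u)) (𝓝 c))
    (hψ : EventuallyEqOrInPoleGap (S.psiI n i) (𝓝 c) z) :
    ∀ᶠ v in 𝓝 c, IsC1At (S.psiI n i) v → IsC1At (S.zetaI n i) v := by
  have := S.eventually_isC1At_zetaI n isOpen_univ (c := c) (i := i) (z := z)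
  simp only [nhdsWithin_univ] at this
  exact this hτ hψ

theorem eventually_coeT_eq_zetaI {F : ℝ → ℝ}
    (hlift : ∀ᶠ u in 𝓝 c, coeT (F u) = S.psiI n i u) :
    ∀ᶠ u in 𝓝 c, coeT (S.G i (S.tauT (S.psi n u)) (F u)) = S.zetaI n i u :=
  hlift.mono fun u hu => by rw [zetaI_eq, ← hu, Base.gT_coeT]

theorem contMonoNear_zetaI_of_eventuallyConst (hψ : ContMonoNear (S.psiI n i) c)
    (hτ : EventuallyConst (fun u => S.tauT (S.psi n u)) (𝓝 c)) :
    ContMonoNear (S.zetaI n i) c := by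
  obtain ⟨F, hlift, s, hs, hFc, hFm⟩ := contMonoNear_iff.1 hψ
  obtain ⟨t, ht⟩ := hτ.eventuallyEq_const
  obtain ⟨s', hs', hc, hm⟩ :=
    (S.isFlowOf i).exists_continuousOn_monotoneOn_of_eventuallyEq hs hFc hFm ht
  exact contMonoNear_iff.2 ⟨_, S.eventually_coeT_eq_zetaI n hlift, s', hs', hc, hm⟩

theorem contMonoNear_zetaI_of_isPole (hψ : ContMonoNear (S.psiI n i) c)
    (hpole : IsPole (S.psiI n i c))
    (hL : EventuallyConst (fun u => S.tauT (S.psi n u)) (𝓝[<] c))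
    (hR : EventuallyConst (fun u => S.tauT (S.psi n u)) (𝓝[>] c)) :
    ContMonoNear (S.zetaI n i) c := by
  obtain ⟨F, hlift, s, hs, hFc, hFm⟩ := contMonoNear_iff.1 hψ
  obtain ⟨tL, htL⟩ := hL.eventuallyEq_const
  obtain ⟨tR, htR⟩ := hR.eventuallyEq_const
  have hfix : S.V i (F c) = 0 := by rwa [Base.V_eq_zero_iff, hlift.self_of_nhds]
  obtain ⟨s', hs', hc, hm⟩ :=
    (S.isFlowOf i).exists_continuousOn_monotoneOn_of_apply_eq_zero hs hFc hFm hfix htL htR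
  exact contMonoNear_iff.2 ⟨_, S.eventually_coeT_eq_zetaI n hlift, s', hs', hc, hm⟩

end Setting

theorem stmt_12_general (S : Setting) (n : ℕ) (ubar : ℝ)
    (hmono : ∀ i : Fin 2, ContMonoNear (S.psiI n i) ubar)
    (hC1 : ∀ i : Fin 2, C1StarNear (S.psiI n i) ubar) :
    ((∀ i : Fin 2, S.psiI n i ubar ≠ coeT 0 ∧ S.psiI n i ubar ≠ coeT (1/2)) →
      ∀ i : Fin 2, ContMonoNear (S.zetaI n i) ubar ∧ C1StarNear (S.zetaI n i) ubar ∧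
        ((∀ j : Fin 2, IsC1At (S.psiI n j) ubar) → IsC1At (S.zetaI n i) ubar)) ∧
    (∀ i : Fin 2, (S.psiI n i ubar = coeT 0 ∨ S.psiI n i ubar = coeT (1/2)) →
      ContMonoNear (S.zetaI n i) ubar ∧ C1StarNear (S.zetaI n i) ubar) := by
  refine ⟨fun hnp i => ?_, fun i hpole => ?_⟩
  · have hgap j := (hmono j).eventuallyEqOrInPoleGap_nhds (not_or.2 (hnp j))
    have hτ := S.eventuallyConst_tauT_psi n hgap
    have hC1ζ := S.eventually_isC1At_zetaI_nhds n hτ (hgap i)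
    exact ⟨S.contMonoNear_zetaI_of_eventuallyConst n (hmono i) hτ,
      (hC1 i).of_eventually_imp (hC1ζ.filter_mono nhdsWithin_le_nhds),
      fun hψ => hC1ζ.self_of_nhds (hψ i)⟩
  · have hL := S.eventuallyConst_tauT_psi n fun j => (hmono j).eventuallyEqOrInPoleGap_nhdsLT
    have hR := S.eventuallyConst_tauT_psi n fun j => (hmono j).eventuallyEqOrInPoleGap_nhdsGT
    refine ⟨S.contMonoNear_zetaI_of_isPole n (hmono i) hpole hL hR,
      (hC1 i).of_eventually_imp ?_⟩
    rw [← nhdsLT_sup_nhdsGT, eventually_sup]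
    exact ⟨S.eventually_isC1At_zetaI n isOpen_Iio hL (hmono i).eventuallyEqOrInPoleGap_nhdsLT,
      S.eventually_isC1At_zetaI n isOpen_Ioi hR (hmono i).eventuallyEqOrInPoleGap_nhdsGT⟩

theorem stmt_12 (S : Setting) (n : ℕ) (ubar : ℝ)
    (hu : ubar ∈ Ioo (0:ℝ) (S.len n))
    (hmono : ∀ i : Fin 2, ContMonoNear (S.psiI n i) ubar)
    (hC1 : ∀ i : Fin 2, C1StarNear (S.psiI n i) ubar) :
    ((∀ i : Fin 2, S.psiI n i ubar ≠ coeT 0 ∧ S.psiI n i ubar ≠ coeT (1/2)) →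
      ∀ i : Fin 2, ContMonoNear (S.zetaI n i) ubar ∧ C1StarNear (S.zetaI n i) ubar ∧
        ((∀ j : Fin 2, IsC1At (S.psiI n j) ubar) → IsC1At (S.zetaI n i) ubar)) ∧
    (∀ i : Fin 2, (S.psiI n i ubar = coeT 0 ∨ S.psiI n i ubar = coeT (1/2)) →
      ContMonoNear (S.zetaI n i) ubar ∧ C1StarNear (S.zetaI n i) ubar) :=
  stmt_12_general S n ubar hmono hC1

end
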